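/- arXiv:2412.15709 — 6 statements merged into one kernel-verified Lean document; each statement's English description precedes it below -/
import Mathlib

section
/- Let F be an equal norm tight frame for an n-dimensional Hilbert space with N elements and frame bound A, and let G = {(1/A)f_i + u_i} be any dual frame of F (so Σ ⟨f, f_i⟩ u_i = 0 for all f). If ‖f_i‖·‖g_i‖ = n/N for all i, then u_i = 0 for all i; i.e., G is the canonical dual. -/
open scoped ComplexInnerProductSpace

/-- Let `F` be an equal norm tight frame (frame bound `A`, `‖f i‖ = √(A n / N)`) for an
`n`-dimensional complex Hilbert space, and `G = {(1/A) • f i + u i}` a dual frame of `F`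
(so `∑ i, ⟨x, f i⟩ • u i = 0` for all `x`). If `‖f i‖ * ‖g i‖ = n / N` for all `i`,
then `u i = 0` for all `i`, i.e. `G` is the canonical dual. -/
theorem dual_of_equal_norm_tight_frame_is_canonical
    {H : Type*} [NormedAddCommGroup H] [InnerProductSpace ℂ H] [FiniteDimensional ℂ H]
    {n N : ℕ} (hn : Module.finrank ℂ H = n)
    (f u : Fin N → H) (A : ℝ) (hA : 0 < A)
    (htight : ∀ x : H, ∑ i, ‖⟪f i, x⟫‖ ^ 2 = A * ‖x‖ ^ 2)
    (hnormf : ∀ i, ‖f i‖ = Real.sqrt (A * n / N))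
    (hu : ∀ x : H, ∑ i, ⟪f i, x⟫ • u i = 0)
    (hng : ∀ i, ‖f i‖ * ‖(A : ℂ)⁻¹ • f i + u i‖ = (n : ℝ) / N) :
    ∀ i, u i = 0 := by
  intro i
  rcases Nat.eq_zero_or_pos n with hn0 | hnpos
  · have hsub : Subsingleton H := by
      rw [← Module.finrank_zero_iff (R := ℂ)]
      omega
    exact Subsingleton.elim _ _
  have hN : 0 < N := i.pos
  have hNr : (0:ℝ) < N := by exact_mod_cast hN
  have hnr : (0:ℝ) < n := by exact_mod_cast hnpos
  have hfn2 : ∀ j, (‖f j‖:ℝ)^2 = A * n / N := by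
    intro j; rw [hnormf j, Real.sq_sqrt]; positivity
  have hfpos : ∀ j, 0 < ‖f j‖ := by
    intro j; rw [hnormf j]
    exact Real.sqrt_pos.mpr (div_pos (mul_pos hA hnr) hNr)
  -- norm of g squared
  have hg2 : ∀ j, ‖(A : ℂ)⁻¹ • f j + u j‖^2 = n/(A*N) := by
    intro j
    have h := hng j
    have hg : ‖(A : ℂ)⁻¹ • f j + u j‖ = ((n:ℝ)/N) / ‖f j‖ := by
      rw [eq_div_iff (hfpos j).ne', mul_comm]; exact h
    rw [hg, div_pow, hfn2 j]
    field_simp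
  -- norm expansion
  have hexp : ∀ j, ‖(A : ℂ)⁻¹ • f j + u j‖^2
      = A⁻¹^2 * (A*n/N) + 2 * A⁻¹ * (⟪f j, u j⟫).re + ‖u j‖^2 := by
    intro j
    rw [norm_add_sq (𝕜 := ℂ)]
    have h1 : ‖(A : ℂ)⁻¹ • f j‖^2 = A⁻¹^2 * (A*n/N) := by
      rw [norm_smul, mul_pow, hfn2 j]
      simp [abs_of_pos (inv_pos.mpr hA)]
    have h2 : (⟪(A : ℂ)⁻¹ • f j, u j⟫).re = A⁻¹ * (⟪f j, u j⟫).re := by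
      rw [inner_smul_left]
      simp
    rw [h1]
    rw [RCLike.re_to_complex] at *
    rw [h2]
    ring
  have hre : ∀ j, 2 * A⁻¹ * (⟪f j, u j⟫).re + ‖u j‖^2 = 0 := by
    intro j
    have h := hexp j
    rw [hg2 j] at h
    have hAinv : A⁻¹^2 * (A*n/N) = n/(A*N) := by
      field_simp
    linarith
  -- sum of inner products is zero
  have key : ∑ j, ⟪f j, u j⟫ = 0 := by
    set b := stdOrthonormalBasis ℂ H with hb
    have h1 : ∀ k, ∑ j, ⟪f j, b k⟫ * ⟪b k, u j⟫ = 0 := by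
      intro k
      have h := congrArg (fun z => ⟪b k, z⟫) (hu (b k))
      simpa [inner_sum, inner_smul_right, mul_comm] using h
    calc ∑ j, ⟪f j, u j⟫
        = ∑ j, ∑ k, ⟪f j, b k⟫ * ⟪b k, u j⟫ :=
          Finset.sum_congr rfl fun j _ => (b.sum_inner_mul_inner (f j) (u j)).symm
      _ = ∑ k, ∑ j, ⟪f j, b k⟫ * ⟪b k, u j⟫ := Finset.sum_comm
      _ = 0 := by simp [h1]
  have hsumre : ∑ j, (⟪f j, u j⟫).re = 0 := by
    have := congrArg Complex.re key
    simpa [Complex.re_sum] using this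
  have hsumu : ∑ j, ‖u j‖^2 = 0 := by
    have h : ∑ j, (2 * A⁻¹ * (⟪f j, u j⟫).re + ‖u j‖^2) = 0 :=
      Finset.sum_eq_zero fun j _ => hre j
    rw [Finset.sum_add_distrib, ← Finset.mul_sum] at h
    rw [hsumre] at h
    simpa using h
  have hz : ‖u i‖^2 = 0 := by
    have := (Finset.sum_eq_zero_iff_of_nonneg (fun j _ => sq_nonneg ‖u j‖)).mp hsumu i (Finset.mem_univ i)
    exact this
  have : ‖u i‖ = 0 := by
    nlinarith [norm_nonneg (u i)]
  exact norm_eq_zero.mp this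
end

section
/- The explicit (n+1, n) dual pair (F, G) for ℂⁿ with f_i = e_i, g_i = e_i − (1/(n+1)) Σ_j e_j for i ≤ n, and f_{n+1} = Σ_j e_j, g_{n+1} = (1/(n+1)) Σ_j e_j, is 2-uniform: ⟨f_i, g_i⟩ = n/(n+1) for all i, and ⟨f_i, g_j⟩⟨f_j, g_i⟩ is the same constant for all i ≠ j. -/
open scoped ComplexInnerProductSpace
open Finset

/-- The explicit `(n + 1, n)` dual pair for `ℂⁿ` (`f i = e i`,
`g i = e i - (1/(n+1)) • ∑ j, e j` for `i < n`; `f n = ∑ j, e j`,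
`g n = (1/(n+1)) • ∑ j, e j`) is 2-uniform: `⟨f i, g i⟩ = n/(n+1)` for all `i`, and
`⟨f i, g j⟩ ⟨f j, g i⟩ = 1/(n+1)²` for all `i ≠ j`. -/
theorem explicit_dual_pair_two_uniform
    (n : ℕ)
    (f g : Fin (n + 1) → EuclideanSpace ℂ (Fin n))
    (hf : ∀ i : Fin (n + 1), f i =
      if h : (i : ℕ) < n then EuclideanSpace.single (⟨i, h⟩ : Fin n) (1 : ℂ)
      else ∑ j : Fin n, EuclideanSpace.single j (1 : ℂ))
    (hg : ∀ i : Fin (n + 1), g i =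
      if h : (i : ℕ) < n then
        EuclideanSpace.single (⟨i, h⟩ : Fin n) (1 : ℂ) -
          (((n : ℂ) + 1))⁻¹ • ∑ j : Fin n, EuclideanSpace.single j (1 : ℂ)
      else (((n : ℂ) + 1))⁻¹ • ∑ j : Fin n, EuclideanSpace.single j (1 : ℂ)) :
    (∀ i, ⟪g i, f i⟫ = ((n : ℂ) / (n + 1))) ∧
      ∀ i j, i ≠ j → ⟪g j, f i⟫ * ⟪g i, f j⟫ = 1 / ((n : ℂ) + 1) ^ 2 := by
  have hN : ((n : ℂ) + 1) ≠ 0 := by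
    exact_mod_cast Nat.cast_add_one_ne_zero (R := ℂ) n
  set s : EuclideanSpace ℂ (Fin n) := ∑ j : Fin n, EuclideanSpace.single j (1 : ℂ) with hsdef
  have hs1 : ∀ k : Fin n, ⟪s, EuclideanSpace.single k (1 : ℂ)⟫ = 1 := by
    intro k
    simp [hsdef, sum_inner, EuclideanSpace.inner_single_left, EuclideanSpace.single_apply]
  have hs1' : ∀ k : Fin n, ⟪EuclideanSpace.single k (1 : ℂ), s⟫ = 1 := by
    intro k
    simp [hsdef, inner_sum, EuclideanSpace.inner_single_right, EuclideanSpace.single_apply]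
  have hss : ⟪s, s⟫ = (n : ℂ) := by
    rw [hsdef, sum_inner]
    simp [← hsdef, hs1']
  have hee : ∀ k l : Fin n, ⟪EuclideanSpace.single k (1 : ℂ), EuclideanSpace.single l (1 : ℂ)⟫
      = if l = k then 1 else 0 := by
    intro k l
    simp [EuclideanSpace.inner_single_left, EuclideanSpace.single_apply]
    exact if_congr eq_comm rfl rfl
  have key : ∀ i j : Fin (n + 1), ⟪g j, f i⟫ =
      if hj : (j : ℕ) < n then
        (if hi : (i : ℕ) < n then
          (if (⟨i, hi⟩ : Fin n) = ⟨j, hj⟩ then 1 else 0) - ((n : ℂ) + 1)⁻¹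
        else 1 - ((n : ℂ) + 1)⁻¹ * n)
      else
        (if hi : (i : ℕ) < n then ((n : ℂ) + 1)⁻¹ else ((n : ℂ) + 1)⁻¹ * n) := by
    intro i j
    have hss2 : ((‖s‖ : ℂ)) ^ 2 = n := by rw [← hss]; simp
    rw [hf i, hg j]
    by_cases hj : (j : ℕ) < n <;> by_cases hi : (i : ℕ) < n <;>
      simp [hi, hj, inner_sub_left, inner_smul_left, hs1, hs1', hss, hee, hss2] <;> ring
  constructor
  · intro i
    rw [key i i]
    by_cases hi : (i : ℕ) < n <;> simp [hi] <;> field_simp <;> ring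
  · intro i j hij
    have hij' : (i : ℕ) ≠ (j : ℕ) := fun h => hij (Fin.ext h)
    rw [key i j, key j i]
    by_cases hi : (i : ℕ) < n <;> by_cases hj : (j : ℕ) < n
    · have h1 : ¬ ((⟨i, hi⟩ : Fin n) = ⟨j, hj⟩) := by simp [Fin.ext_iff, hij']
      have h2 : ¬ ((⟨j, hj⟩ : Fin n) = ⟨i, hi⟩) := by simp [Fin.ext_iff, hij'.symm]
      simp [hi, hj, h1, h2]
      field_simp
    · simp [hi, hj]
      field_simp
      ring
    · simp [hi, hj]
      field_simp
      ring
    · omega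
end

section
/- For any dual pair (F,G) of N-element frames for an n-dimensional Hilbert space with N > n, Σ_{i≠j} ⟨f_i, g_j⟩⟨f_j, g_i⟩ = n(N−n)/N > 0; consequently max_{i≠j} Re(⟨f_i, g_j⟩⟨f_j, g_i⟩) ≥ n(N−n)/(N²(N−1)) > 0, assuming ⟨f_i, g_i⟩ = n/N for all i. -/
open scoped ComplexInnerProductSpace

/-- For a 1-uniform dual pair `(F, G)` (`⟨f i, g i⟩ = n/N`) for an `n`-dimensional
complex Hilbert space with `N > n ≥ 1`:
`∑_{i ≠ j} ⟨f i, g j⟩ ⟨f j, g i⟩ = n (N - n)/N > 0`, and consequently some off-diagonal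
pair satisfies `Re(⟨f i, g j⟩ ⟨f j, g i⟩) ≥ n (N - n)/(N² (N - 1)) > 0`. -/
theorem off_diagonal_sum_and_max
    {H : Type*} [NormedAddCommGroup H] [InnerProductSpace ℂ H] [FiniteDimensional ℂ H]
    {n N : ℕ} (hn : Module.finrank ℂ H = n) (hn1 : 0 < n) (hnN : n < N)
    (f g : Fin N → H)
    (hdual : ∀ x : H, ∑ i, ⟪f i, x⟫ • g i = x)
    (huniform : ∀ i, ⟪g i, f i⟫ = ((n : ℂ) / N)) :
    (∑ i, ∑ j, if i ≠ j then ⟪g j, f i⟫ * ⟪g i, f j⟫ else 0)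
        = ((n : ℂ) * ((N : ℂ) - n) / N) ∧
      (0 : ℝ) < (n : ℝ) * ((N : ℝ) - n) / N ∧
      (0 : ℝ) < (n : ℝ) * ((N : ℝ) - n) / ((N : ℝ) ^ 2 * ((N : ℝ) - 1)) ∧
      ∃ i j, i ≠ j ∧
        (n : ℝ) * ((N : ℝ) - n) / ((N : ℝ) ^ 2 * ((N : ℝ) - 1))
          ≤ (⟪g j, f i⟫ * ⟪g i, f j⟫).re := by
  have hN2 : 2 ≤ N := by omega
  have hNR : (0:ℝ) < N := by exact_mod_cast (by omega : 0 < N)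
  have hNC : (N:ℂ) ≠ 0 := by exact_mod_cast (by omega : N ≠ 0)
  -- dual symmetry
  have hdual' : ∀ x : H, ∑ j, ⟪g j, x⟫ • f j = x := by
    intro x
    apply ext_inner_right ℂ
    intro v
    calc ⟪∑ j, ⟪g j, x⟫ • f j, v⟫ = ∑ j, ⟪x, g j⟫ * ⟪f j, v⟫ := by
          rw [sum_inner]; simp [inner_smul_left, inner_conj_symm]
      _ = ⟪x, ∑ j, ⟪f j, v⟫ • g j⟫ := by
          rw [inner_sum]; simp [inner_smul_right]; exact Finset.sum_congr rfl fun j _ => mul_comm _ _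
      _ = ⟪x, v⟫ := by rw [hdual v]
  -- trace identity per row
  have htrace : ∀ i, ∑ j, ⟪g j, f i⟫ * ⟪g i, f j⟫ = ⟪g i, f i⟫ := by
    intro i
    calc ∑ j, ⟪g j, f i⟫ * ⟪g i, f j⟫ = ⟪g i, ∑ j, ⟪g j, f i⟫ • f j⟫ := by
          rw [inner_sum]; simp [inner_smul_right]
      _ = ⟪g i, f i⟫ := by rw [hdual' (f i)]
  -- off-diagonal row sum
  have hrow : ∀ i, (∑ j, if i ≠ j then ⟪g j, f i⟫ * ⟪g i, f j⟫ else 0)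
      = ⟪g i, f i⟫ - ⟪g i, f i⟫ * ⟪g i, f i⟫ := by
    intro i
    have : ∀ j, (if i ≠ j then ⟪g j, f i⟫ * ⟪g i, f j⟫ else 0)
        = ⟪g j, f i⟫ * ⟪g i, f j⟫ - (if i = j then ⟪g j, f i⟫ * ⟪g i, f j⟫ else 0) := by
      intro j; by_cases h : i = j <;> simp [h]
    rw [Finset.sum_congr rfl fun j _ => this j, Finset.sum_sub_distrib, htrace i,
      Finset.sum_ite_eq]
    simp
  have hmain : (∑ i, ∑ j, if i ≠ j then ⟪g j, f i⟫ * ⟪g i, f j⟫ else 0)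
      = ((n : ℂ) * ((N : ℂ) - n) / N) := by
    rw [Finset.sum_congr rfl fun i _ => hrow i]
    simp only [huniform]
    rw [Finset.sum_const, Finset.card_univ, Fintype.card_fin]
    simp only [nsmul_eq_mul]
    field_simp
  refine ⟨hmain, ?_, ?_, ?_⟩
  · apply div_pos _ hNR
    apply mul_pos (by exact_mod_cast hn1)
    have : (n:ℝ) < N := by exact_mod_cast hnN
    linarith
  · apply div_pos
    · apply mul_pos (by exact_mod_cast hn1)
      have : (n:ℝ) < N := by exact_mod_cast hnN
      linarith
    · apply mul_pos (by positivity)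
      have : (2:ℝ) ≤ N := by exact_mod_cast hN2
      linarith
  · -- averaging over the off-diagonal
    set r : ℝ := (n : ℝ) * ((N : ℝ) - n) / ((N : ℝ) ^ 2 * ((N : ℝ) - 1)) with hr
    set s : Finset (Fin N × Fin N) := Finset.univ.offDiag with hs
    have hsum_off : ∑ p ∈ s, (⟪g p.2, f p.1⟫ * ⟪g p.1, f p.2⟫)
        = ((n : ℂ) * ((N : ℂ) - n) / N) := by
      rw [hs, (show Finset.univ.offDiag = (Finset.univ ×ˢ Finset.univ).filter (fun p : Fin N × Fin N => p.1 ≠ p.2) by ext; simp), Finset.sum_filter, ← hmain, Finset.sum_product]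
    have hre : ∑ p ∈ s, (⟪g p.2, f p.1⟫ * ⟪g p.1, f p.2⟫).re
        = (n : ℝ) * ((N : ℝ) - n) / N := by
      have := congrArg Complex.re hsum_off
      rw [Complex.re_sum] at this
      rw [this]
      have : ((n : ℂ) * ((N : ℂ) - n) / N) = (((n : ℝ) * ((N : ℝ) - n) / N : ℝ) : ℂ) := by
        push_cast; ring
      rw [this, Complex.ofReal_re]
    have hcard : s.card = N * N - N := by
      rw [hs, Finset.offDiag_card]; simp
    have hne : s.Nonempty := by
      refine ⟨(⟨0, by omega⟩, ⟨1, by omega⟩), ?_⟩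
      rw [hs, Finset.mem_offDiag]
      refine ⟨Finset.mem_univ _, Finset.mem_univ _, ?_⟩
      simp [Fin.ext_iff]
    have hconst : ∑ _p ∈ s, r ≤ ∑ p ∈ s, (⟪g p.2, f p.1⟫ * ⟪g p.1, f p.2⟫).re := by
      rw [Finset.sum_const, hcard, hre, nsmul_eq_mul]
      have hcast : ((N * N - N : ℕ) : ℝ) = (N:ℝ) * N - N := by
        have : N ≤ N * N := Nat.le_mul_of_pos_left N (by omega)
        push_cast [Nat.cast_sub this]; ring
      rw [hcast, hr]
      have hN1 : (1:ℝ) < N := by exact_mod_cast (by omega : 1 < N)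
      have h1 : (N:ℝ)^2 * ((N:ℝ) - 1) ≠ 0 := by nlinarith
      apply le_of_eq
      have h2 : (N:ℝ) - 1 ≠ 0 := by linarith
      field_simp
    obtain ⟨p, hp, hle⟩ := Finset.exists_le_of_sum_le hne hconst
    rw [hs, Finset.mem_offDiag] at hp
    exact ⟨p.1, p.2, hp.2.2, hle⟩
end

section
/- For a dual pair (F,G) and a single erasure at index i, the numerical radius of the rank-one error operator E_i f = ⟨f, f_i⟩ g_i equals (|⟨g_i, f_i⟩| + ‖g_i‖·‖f_i‖)/2. -/
open scoped ComplexInnerProductSpace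


lemma perp_norm {H : Type*} [NormedAddCommGroup H] [InnerProductSpace ℂ H]
    (fi x : H) (hx : ‖x‖ = 1) :
    ‖fi - ⟪x, fi⟫ • x‖ ^ 2 = ‖fi‖ ^ 2 - ‖⟪fi, x⟫‖ ^ 2 := by
  have h1 : ⟪fi, ⟪x, fi⟫ • x⟫ = ((‖⟪fi, x⟫‖ : ℂ)) ^ 2 := by
    rw [inner_smul_right, ← inner_conj_symm x fi, RCLike.conj_mul]; norm_cast
  have h2 : ‖⟪x, fi⟫ • x‖ = ‖⟪fi, x⟫‖ := by
    rw [norm_smul, hx, mul_one, norm_inner_symm]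
  have := @norm_sub_sq ℂ _ _ _ _ fi (⟪x, fi⟫ • x)
  rw [h1, h2] at this
  rw [this]
  have : RCLike.re (((‖⟪fi, x⟫‖ : ℂ)) ^ 2) = ‖⟪fi, x⟫‖ ^ 2 := by
    norm_cast
  rw [this]; ring

lemma rank_one_upper {H : Type*} [NormedAddCommGroup H] [InnerProductSpace ℂ H]
    (fi gi x : H) (hx : ‖x‖ = 1) :
    ‖⟪fi, x⟫‖ * ‖⟪x, gi⟫‖ ≤ (‖⟪fi, gi⟫‖ + ‖fi‖ * ‖gi‖) / 2 := by
  set a := ‖⟪fi, x⟫‖ with hadef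
  set b := ‖⟪x, gi⟫‖ with hbdef
  set F := ‖fi‖
  set G := ‖gi‖
  have ha0 : 0 ≤ a := norm_nonneg _
  have hb0 : 0 ≤ b := norm_nonneg _
  have haF : a ≤ F := by simpa [hx] using norm_inner_le_norm fi x
  have hbG : b ≤ G := by simpa [hx] using norm_inner_le_norm x gi
  have hxx : ⟪x, x⟫ = (1 : ℂ) := by
    simp [inner_self_eq_norm_sq_to_K, hx]
  have key : ⟪fi - ⟪x, fi⟫ • x, gi - ⟪x, gi⟫ • x⟫
      = ⟪fi, gi⟫ - ⟪fi, x⟫ * ⟪x, gi⟫ := by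
    simp only [inner_sub_left, inner_sub_right, inner_smul_left, inner_smul_right,
      inner_conj_symm, hxx]
    ring
  have hnu : ‖fi - ⟪x, fi⟫ • x‖ ^ 2 = F ^ 2 - a ^ 2 := perp_norm fi x hx
  have hnv : ‖gi - ⟪x, gi⟫ • x‖ ^ 2 = G ^ 2 - b ^ 2 := by
    have := perp_norm gi x hx
    rwa [norm_inner_symm gi x] at this
  -- Cauchy-Schwarz on the perpendicular parts
  have hcs : ‖⟪fi - ⟪x, fi⟫ • x, gi - ⟪x, gi⟫ • x⟫‖
      ≤ ‖fi - ⟪x, fi⟫ • x‖ * ‖gi - ⟪x, gi⟫ • x‖ := norm_inner_le_norm _ _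
  have hsq : (‖fi - ⟪x, fi⟫ • x‖ * ‖gi - ⟪x, gi⟫ • x‖) ^ 2 ≤ (F * G - a * b) ^ 2 := by
    rw [mul_pow, hnu, hnv]
    nlinarith [sq_nonneg (F * b - G * a)]
  have hFGab : 0 ≤ F * G - a * b := by nlinarith
  have hle : ‖fi - ⟪x, fi⟫ • x‖ * ‖gi - ⟪x, gi⟫ • x‖ ≤ F * G - a * b := by
    nlinarith [mul_nonneg (norm_nonneg (fi - ⟪x, fi⟫ • x)) (norm_nonneg (gi - ⟪x, gi⟫ • x))]
  have hab : a * b ≤ ‖⟪fi, gi⟫‖ + ‖⟪fi - ⟪x, fi⟫ • x, gi - ⟪x, gi⟫ • x⟫‖ := by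
    have : (⟪fi, x⟫ * ⟪x, gi⟫ : ℂ) = ⟪fi, gi⟫ - ⟪fi - ⟪x, fi⟫ • x, gi - ⟪x, gi⟫ • x⟫ := by
      rw [key]; ring
    calc a * b = ‖(⟪fi, x⟫ * ⟪x, gi⟫ : ℂ)‖ := (norm_mul _ _).symm
      _ ≤ _ := by rw [this]; exact norm_sub_le _ _
  linarith [le_trans hcs hle]


lemma cnorm_of_nonneg {r : ℝ} (hr : 0 ≤ r) : ‖(r : ℂ)‖ = r := by
  rw [Complex.norm_real, Real.norm_of_nonneg hr]

lemma rank_one_witness {H : Type*} [NormedAddCommGroup H] [InnerProductSpace ℂ H]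
    (fi gi : H) (hf : fi ≠ 0) (hg : gi ≠ 0) :
    ∃ x : H, ‖x‖ = 1 ∧ ‖⟪fi, x⟫‖ * ‖⟪x, gi⟫‖ = (‖⟪fi, gi⟫‖ + ‖fi‖ * ‖gi‖) / 2 := by
  set F := ‖fi‖ with hFdef
  set G := ‖gi‖ with hGdef
  set z : ℂ := ⟪fi, gi⟫ with hzdef
  set c := ‖z‖ with hcdef
  have hF : 0 < F := norm_pos_iff.mpr hf
  have hG : 0 < G := norm_pos_iff.mpr hg
  have hc0 : 0 ≤ c := norm_nonneg _
  set θ : ℂ := if z = 0 then 1 else z / c with hθdef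
  have hθ : ‖θ‖ = 1 := by
    rw [hθdef]
    split_ifs with h
    · simp
    · have hc : c ≠ 0 := by simpa [hcdef] using h
      have hz' : ‖z‖ ≠ 0 := norm_ne_zero_iff.mpr h
      rw [norm_div, cnorm_of_nonneg hc0, hcdef]
      exact div_self hz'
  have hzθ : z = θ * c := by
    rw [hθdef]
    split_ifs with h
    · simp [h, hcdef]
    · have : (c : ℂ) ≠ 0 := by
        simp only [hcdef, ne_eq, Complex.ofReal_eq_zero, norm_eq_zero]
        exact h
      field_simp
  have hconj : (starRingEnd ℂ) θ * z = (c : ℂ) := by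
    have h1 : (starRingEnd ℂ) θ * θ = 1 := by
      rw [RCLike.conj_mul, hθ]; norm_num
    calc (starRingEnd ℂ) θ * z = (starRingEnd ℂ) θ * θ * c := by rw [hzθ]; ring
      _ = (c : ℂ) := by rw [h1]; ring
  set w : H := (G : ℂ) • (θ • fi) + (F : ℂ) • gi with hwdef
  have hfifi : ⟪fi, fi⟫ = ((F : ℂ)) ^ 2 := by
    rw [inner_self_eq_norm_sq_to_K]; norm_cast
  have hgigi : ⟪gi, gi⟫ = ((G : ℂ)) ^ 2 := by
    rw [inner_self_eq_norm_sq_to_K]; norm_cast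
  have hw2 : ‖w‖ ^ 2 = 2 * F * G * (F * G + c) := by
    have hAB : ⟪(G : ℂ) • (θ • fi), (F : ℂ) • gi⟫ = ((G * F * c : ℝ) : ℂ) := by
      simp only [inner_smul_left, inner_smul_right, Complex.conj_ofReal, ← hzdef]
      rw [show (F : ℂ) * ((G : ℂ) * ((starRingEnd ℂ) θ * z))
          = (G : ℂ) * (F : ℂ) * ((starRingEnd ℂ) θ * z) by ring, hconj]
      push_cast; ring
    have hnA : ‖(G : ℂ) • (θ • fi)‖ = G * F := by
      rw [norm_smul, norm_smul, hθ, cnorm_of_nonneg hG.le]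
      ring
    have hnB : ‖(F : ℂ) • gi‖ = F * G := by
      rw [norm_smul, cnorm_of_nonneg hF.le]
    have := @norm_add_sq ℂ _ _ _ _ ((G : ℂ) • (θ • fi)) ((F : ℂ) • gi)
    rw [hAB, hnA, hnB] at this
    have hre : RCLike.re ((G * F * c : ℝ) : ℂ) = G * F * c := by norm_cast
    rw [hwdef, this, hre]
    ring
  have hwpos : 0 < ‖w‖ := by
    nlinarith [norm_nonneg w, mul_pos (mul_pos (mul_pos (by norm_num : (0:ℝ) < 2) hF) hG)
      (by nlinarith : (0:ℝ) < F * G + c)]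
  have hwne : ‖w‖ ≠ 0 := ne_of_gt hwpos
  refine ⟨((‖w‖⁻¹ : ℝ) : ℂ) • w, ?_, ?_⟩
  · rw [norm_smul, cnorm_of_nonneg (inv_nonneg.mpr hwpos.le)]
    field_simp
  · have hfw : ⟪fi, w⟫ = θ * ((F * (G * F + c) : ℝ) : ℂ) := by
      rw [hwdef]
      simp only [inner_add_right, inner_smul_right, hfifi, ← hzdef, hzθ]
      push_cast; ring
    have hwg : ⟪w, gi⟫ = ((G * (c + F * G) : ℝ) : ℂ) := by
      rw [hwdef]
      simp only [inner_add_left, inner_smul_left, Complex.conj_ofReal, ← hzdef, hgigi]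
      rw [hconj]
      push_cast; ring
    have hfx : ‖⟪fi, ((‖w‖⁻¹ : ℝ) : ℂ) • w⟫‖ = ‖w‖⁻¹ * (F * (G * F + c)) := by
      rw [inner_smul_right, hfw, norm_mul, norm_mul, hθ,
        cnorm_of_nonneg (inv_nonneg.mpr hwpos.le), cnorm_of_nonneg (by positivity)]
      ring
    have hxg : ‖⟪((‖w‖⁻¹ : ℝ) : ℂ) • w, gi⟫‖ = ‖w‖⁻¹ * (G * (c + F * G)) := by
      rw [inner_smul_left, Complex.conj_ofReal, hwg, norm_mul,
        cnorm_of_nonneg (inv_nonneg.mpr hwpos.le), cnorm_of_nonneg (by positivity)]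
    rw [hfx, hxg]
    have hinv : ‖w‖⁻¹ * ‖w‖⁻¹ = (2 * F * G * (F * G + c))⁻¹ := by
      rw [← mul_inv]
      congr 1
      nlinarith [hw2]
    have hFGc : F * G + c > 0 := by nlinarith
    field_simp [hwne]
    nlinarith [hw2, sq_nonneg ‖w‖]


/-- The numerical radius of the rank-one error operator `E : x ↦ ⟨x, fi⟩ • gi`
(paper's `⟨x, fi⟩` is `⟪fi, x⟫`) equals `(|⟨gi, fi⟩| + ‖gi‖ ‖fi‖) / 2`, where
`ω(E) = sup {|⟨E x, x⟩| : ‖x‖ = 1}`. -/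
theorem numerical_radius_rank_one
    {H : Type*} [NormedAddCommGroup H] [InnerProductSpace ℂ H] [FiniteDimensional ℂ H]
    (fi gi : H) :
    sSup {r : ℝ | ∃ x : H, ‖x‖ = 1 ∧ r = ‖⟪x, (⟪fi, x⟫ • gi : H)⟫‖}
      = (‖⟪fi, gi⟫‖ + ‖gi‖ * ‖fi‖) / 2 := by
  have hval : ∀ x : H, ‖⟪x, (⟪fi, x⟫ • gi : H)⟫‖ = ‖⟪fi, x⟫‖ * ‖⟪x, gi⟫‖ := by
    intro x; rw [inner_smul_right, norm_mul]
  by_cases hfg : fi = 0 ∨ gi = 0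
  · have hR : (‖⟪fi, gi⟫‖ + ‖gi‖ * ‖fi‖) / 2 = 0 := by
      rcases hfg with h | h <;> simp [h]
    rw [hR]
    have hsub : {r : ℝ | ∃ x : H, ‖x‖ = 1 ∧ r = ‖⟪x, (⟪fi, x⟫ • gi : H)⟫‖} ⊆ {0} := by
      rintro r ⟨x, hx, rfl⟩
      rcases hfg with h | h <;> simp [h]
    rcases Set.subset_singleton_iff_eq.mp hsub with h | h
    · rw [h, Real.sSup_empty]
    · rw [h, csSup_singleton]
  · push_neg at hfg
    obtain ⟨hf, hg⟩ := hfg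
    obtain ⟨x0, hx0, hx0v⟩ := rank_one_witness fi gi hf hg
    have hgr : IsGreatest {r : ℝ | ∃ x : H, ‖x‖ = 1 ∧ r = ‖⟪x, (⟪fi, x⟫ • gi : H)⟫‖}
        ((‖⟪fi, gi⟫‖ + ‖fi‖ * ‖gi‖) / 2) := by
      constructor
      · exact ⟨x0, hx0, by rw [hval, hx0v]⟩
      · rintro r ⟨x, hx, rfl⟩
        rw [hval]
        exact rank_one_upper fi gi x hx
    rw [show ‖gi‖ * ‖fi‖ = ‖fi‖ * ‖gi‖ by ring]
    exact hgr.csSup_eq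
end

section
/- For any dual pair (F,G) of N-element frames for an n-dimensional Hilbert space, max_{1 ≤ i ≤ N} (|⟨g_i, f_i⟩| + ‖g_i‖·‖f_i‖)/2 ≥ n/N, and equality holds if and only if ‖f_i‖·‖g_i‖ = n/N for all i. -/
open scoped ComplexInnerProductSpace

/-- For any dual pair `(F, G)` of `N`-element frames for an `n`-dimensional complex
Hilbert space, `max_i (|⟨g i, f i⟩| + ‖g i‖ ‖f i‖)/2 ≥ n/N`, with equality if and only
if `‖f i‖ * ‖g i‖ = n/N` for all `i`. -/
theorem numerical_radius_one_erasure_bound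
    {H : Type*} [NormedAddCommGroup H] [InnerProductSpace ℂ H] [FiniteDimensional ℂ H]
    {n N : ℕ} (hn : Module.finrank ℂ H = n) (hN : 0 < N)
    (f g : Fin N → H)
    (hdual : ∀ x : H, ∑ i, ⟪f i, x⟫ • g i = x) :
    ((n : ℝ) / N ≤ ⨆ i : Fin N, (‖⟪f i, g i⟫‖ + ‖g i‖ * ‖f i‖) / 2) ∧
      ((⨆ i : Fin N, (‖⟪f i, g i⟫‖ + ‖g i‖ * ‖f i‖) / 2) = (n : ℝ) / N ↔
        ∀ i, ‖f i‖ * ‖g i‖ = (n : ℝ) / N) := by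
  have hNpos : (0:ℝ) < N := by exact_mod_cast hN
  haveI : Nonempty (Fin N) := ⟨⟨0, hN⟩⟩
  set b := (stdOrthonormalBasis ℂ H).reindex (finCongr hn) with hb
  -- trace identity
  have key : ∑ i, ⟪f i, g i⟫ = (n : ℂ) := by
    have step1 : ∀ i, ⟪f i, g i⟫ = ∑ j, ⟪f i, b j⟫ * ⟪b j, g i⟫ := fun i =>
      (b.sum_inner_mul_inner (f i) (g i)).symm
    calc ∑ i, ⟪f i, g i⟫ = ∑ i, ∑ j, ⟪f i, b j⟫ * ⟪b j, g i⟫ := by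
          exact Finset.sum_congr rfl fun i _ => step1 i
      _ = ∑ j, ∑ i, ⟪f i, b j⟫ * ⟪b j, g i⟫ := Finset.sum_comm
      _ = ∑ j : Fin n, ⟪b j, b j⟫ := by
          refine Finset.sum_congr rfl fun j _ => ?_
          calc ∑ i, ⟪f i, b j⟫ * ⟪b j, g i⟫ = ⟪b j, ∑ i, ⟪f i, b j⟫ • g i⟫ := by
                rw [inner_sum]
                exact Finset.sum_congr rfl fun i _ => by rw [inner_smul_right]
            _ = ⟪b j, b j⟫ := by rw [hdual]
      _ = (n : ℂ) := by
          have : ∀ j : Fin n, ⟪b j, b j⟫ = 1 := fun j => by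
            have := b.orthonormal.1 j
            rw [@inner_self_eq_norm_sq_to_K ℂ, this]; norm_num
          simp [this]
  set t : Fin N → ℝ := fun i => (‖⟪f i, g i⟫‖ + ‖g i‖ * ‖f i‖) / 2 with ht
  have hcs : ∀ i, ‖⟪f i, g i⟫‖ ≤ ‖f i‖ * ‖g i‖ := fun i => norm_inner_le_norm _ _
  have hle : ∀ i, ‖⟪f i, g i⟫‖ ≤ t i := fun i => by
    have := hcs i; simp only [ht]; nlinarith [mul_comm (‖f i‖) (‖g i‖)]
  have hnsum : (n : ℝ) ≤ ∑ i, ‖⟪f i, g i⟫‖ := by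
    have : ‖∑ i, ⟪f i, g i⟫‖ = (n : ℝ) := by rw [key]; simp
    calc (n:ℝ) = ‖∑ i, ⟪f i, g i⟫‖ := this.symm
      _ ≤ ∑ i, ‖⟪f i, g i⟫‖ := norm_sum_le _ _
  have hbdd : BddAbove (Set.range t) := (Set.finite_range t).bddAbove
  have hsup : ∀ i, t i ≤ ⨆ j, t j := fun i => le_ciSup hbdd i
  have hlow : (n : ℝ) / N ≤ ⨆ i, t i := by
    have h1 : ∑ i, t i ≤ ∑ i : Fin N, (⨆ j, t j) :=
      Finset.sum_le_sum fun i _ => hsup i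
    have h2 : (n:ℝ) ≤ ∑ i, t i := le_trans hnsum (Finset.sum_le_sum fun i _ => hle i)
    have h3 : ∑ i : Fin N, (⨆ j, t j) = N * (⨆ j, t j) := by
      simp [Finset.sum_const, mul_comm]
    rw [div_le_iff₀ hNpos]
    nlinarith
  refine ⟨hlow, ?_, ?_⟩
  · intro hM
    have htle : ∀ i, t i ≤ (n:ℝ)/N := fun i => hM ▸ hsup i
    have hNn : ∑ _i : Fin N, (n:ℝ)/N = (n:ℝ) := by
      rw [Finset.sum_const, Finset.card_univ, Fintype.card_fin, nsmul_eq_mul]; field_simp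
    have hsumt_le : ∑ i, t i ≤ (n:ℝ) := by
      rw [← hNn]; exact Finset.sum_le_sum fun i _ => htle i
    have hsum_norm_eq : ∑ i, ‖⟪f i, g i⟫‖ = ∑ i, t i :=
      le_antisymm (Finset.sum_le_sum fun i _ => hle i)
        (by linarith [le_trans hnsum (Finset.sum_le_sum fun i _ => hle i)])
    have heq1 : ∀ i ∈ Finset.univ, ‖⟪f i, g i⟫‖ = t i :=
      (Finset.sum_eq_sum_iff_of_le (fun i _ => hle i)).mp hsum_norm_eq
    have hsum_norm : ∑ i, ‖⟪f i, g i⟫‖ = (n:ℝ) :=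
      le_antisymm (by rw [hsum_norm_eq]; exact hsumt_le) hnsum
    have heq2 : ∀ i ∈ Finset.univ, ‖⟪f i, g i⟫‖ = (n:ℝ)/N := by
      have := (Finset.sum_eq_sum_iff_of_le
        (f := fun i : Fin N => ‖⟪f i, g i⟫‖) (g := fun _ => (n:ℝ)/N)
        (fun i _ => le_of_eq_of_le (heq1 i (Finset.mem_univ i)) (htle i))).mp
        (by rw [hsum_norm, hNn])
      exact this
    intro i
    have e1 := heq1 i (Finset.mem_univ i)
    have e2 := heq2 i (Finset.mem_univ i)
    simp only [ht] at e1
    nlinarith [mul_comm (‖f i‖) (‖g i‖)]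
  · intro h
    refine le_antisymm (ciSup_le fun i => ?_) hlow
    have := hcs i
    rw [h i] at this
    simp only [ht]
    nlinarith [mul_comm (‖f i‖) (‖g i‖), h i]
end

section
/- Let F be a frame for an n-dimensional Hilbert space with frame operator S_F such that ⟨f_i, S_F^{-1} f_i⟩ = n/N and ‖f_i‖·‖S_F^{-1} f_i‖ = n/N for all i. If G = {S_F^{-1} f_i + u_i} is any dual of F with ‖f_i‖·‖g_i‖ = n/N for all i, then u_i = 0 for all i, i.e., G is the canonical dual. -/
open scoped ComplexInnerProductSpace

/-- Let `F` be a frame for an `n`-dimensional complex Hilbert space with frame operator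
`S : x ↦ ∑ i, ⟨x, f i⟩ • f i` (with two-sided inverse `Sinv`) satisfying
`⟨f i, S⁻¹ f i⟩ = n/N` and `‖f i‖ ‖S⁻¹ f i‖ = n/N` for all `i`.  If
`G = {S⁻¹ f i + u i}` is a dual of `F` (`∑ i, ⟨x, f i⟩ • u i = 0` for all `x`) with
`‖f i‖ ‖g i‖ = n/N` for all `i`, then `u i = 0` for all `i`; i.e. `G` is the canonical
dual. -/
theorem numerically_optimal_dual_is_canonical
    {H : Type*} [NormedAddCommGroup H] [InnerProductSpace ℂ H] [FiniteDimensional ℂ H]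
    {n N : ℕ} (hn : Module.finrank ℂ H = n)
    (f u : Fin N → H)
    (S Sinv : H →ₗ[ℂ] H)
    (hS : ∀ x : H, S x = ∑ i, ⟪f i, x⟫ • f i)
    (hSinv₁ : S ∘ₗ Sinv = LinearMap.id) (hSinv₂ : Sinv ∘ₗ S = LinearMap.id)
    (hdiag : ∀ i, ⟪Sinv (f i), f i⟫ = ((n : ℂ) / N))
    (hcanon : ∀ i, ‖f i‖ * ‖Sinv (f i)‖ = (n : ℝ) / N)
    (hu : ∀ x : H, ∑ i, ⟪f i, x⟫ • u i = 0)
    (hg : ∀ i, ‖f i‖ * ‖Sinv (f i) + u i‖ = (n : ℝ) / N) :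
    ∀ i, u i = 0 := by
  -- trivial case: n = 0
  rcases Nat.eq_zero_or_pos n with hn0 | hnpos
  · subst hn0
    have : Subsingleton H := Module.finrank_zero_iff.mp hn
    intro i; exact Subsingleton.elim _ _
  -- Step 1: ∑ i, ⟪f i, u i⟫ = 0
  have hsum : ∑ i, ⟪f i, u i⟫ = 0 := by
    have b := stdOrthonormalBasis ℂ H
    calc ∑ i, ⟪f i, u i⟫
        = ∑ i, ∑ k, ⟪f i, b k⟫ * ⟪b k, u i⟫ := by
          simp_rw [b.sum_inner_mul_inner]
      _ = ∑ k, ∑ i, ⟪f i, b k⟫ * ⟪b k, u i⟫ := Finset.sum_comm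
      _ = ∑ k, ⟪b k, ∑ i, ⟪f i, b k⟫ • u i⟫ := by
          simp_rw [inner_sum, inner_smul_right]
      _ = 0 := by simp_rw [hu]; simp
  intro i
  have hNpos : 0 < N := i.pos
  have hr : (0:ℝ) < (n:ℝ)/N := by positivity
  have hfne : ∀ j : Fin N, f j ≠ 0 := by
    intro j hj
    have h := hcanon j
    rw [hj, norm_zero, zero_mul] at h
    linarith
  -- d j = ⟪u j, f j⟫
  set d : Fin N → ℂ := fun j => ⟪u j, f j⟫ with hd
  have hdsum : ∑ j, d j = 0 := by
    have h2 := congrArg (starRingEnd ℂ) hsum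
    simp only [map_sum, inner_conj_symm, map_zero] at h2
    exact h2
  -- each j: 2r * (d j).re + normSq (d j) ≤ 0
  have hkey : ∀ j : Fin N, 2 * ((n:ℝ)/N) * (d j).re + Complex.normSq (d j) ≤ 0 := by
    intro j
    have hcs : ‖⟪Sinv (f j) + u j, f j⟫‖ ≤ ‖Sinv (f j) + u j‖ * ‖f j‖ :=
      norm_inner_le_norm _ _
    have hval : ⟪Sinv (f j) + u j, f j⟫ = ((n:ℂ)/N) + d j := by
      rw [inner_add_left, hdiag]
    rw [hval, mul_comm, hg j] at hcs
    have hsq : Complex.normSq (((n:ℂ)/N) + d j) ≤ ((n:ℝ)/N)^2 := by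
      have h3 : ‖((n:ℂ)/N) + d j‖^2 ≤ ((n:ℝ)/N)^2 :=
        pow_le_pow_left₀ (norm_nonneg _) hcs 2
      rwa [Complex.sq_norm] at h3
    have hre : (((n:ℂ)/N) + d j).re = (n:ℝ)/N + (d j).re := by
      simp [Complex.add_re]
    have him : (((n:ℂ)/N) + d j).im = (d j).im := by
      simp [Complex.add_im]
    rw [Complex.normSq_apply, hre, him] at hsq
    nlinarith [Complex.normSq_apply (d j)]
  -- summing gives each d j = 0
  have hdz : ∀ j, d j = 0 := by
    have hresum : ∑ j, (d j).re = 0 := by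
      have := congrArg Complex.re hdsum
      simpa [Complex.re_sum] using this
    have hsumle : ∑ j, Complex.normSq (d j) ≤ 0 := by
      have h1 : ∑ j, (2 * ((n:ℝ)/N) * (d j).re + Complex.normSq (d j)) ≤ 0 :=
        Finset.sum_nonpos (fun j _ => hkey j)
      rw [Finset.sum_add_distrib, ← Finset.mul_sum, hresum] at h1
      simpa using h1
    intro j
    have h1 : ∀ j ∈ Finset.univ, (0:ℝ) ≤ Complex.normSq (d j) :=
      fun j _ => Complex.normSq_nonneg _
    have heq : ∑ j, Complex.normSq (d j) = 0 :=
      le_antisymm hsumle (Finset.sum_nonneg h1)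
    exact Complex.normSq_eq_zero.mp
      ((Finset.sum_eq_zero_iff_of_nonneg h1).mp heq j (Finset.mem_univ j))
  -- now equality cases of Cauchy-Schwarz
  have hnef : ‖f i‖ ≠ 0 := norm_ne_zero_iff.mpr (hfne i)
  have hgnorm : ‖Sinv (f i) + u i‖ = ‖Sinv (f i)‖ :=
    mul_left_cancel₀ hnef ((hg i).trans (hcanon i).symm)
  have hcast : ((n:ℂ)/N) = ((‖Sinv (f i)‖ * ‖f i‖ : ℝ) : ℂ) := by
    rw [mul_comm, hcanon i]; push_cast; ring
  have hcs1 : ⟪Sinv (f i), f i⟫ = (‖Sinv (f i)‖ : ℂ) * ‖f i‖ := by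
    rw [hdiag i, hcast]; push_cast; ring
  have hcs2 : ⟪Sinv (f i) + u i, f i⟫ = (‖Sinv (f i) + u i‖ : ℂ) * ‖f i‖ := by
    have hz : ⟪u i, f i⟫ = 0 := hdz i
    rw [inner_add_left, hdiag i, hz, add_zero, hgnorm, hcast]; push_cast; ring
  have e1 := (inner_eq_norm_mul_iff (𝕜 := ℂ)).mp hcs1
  have e2 := (inner_eq_norm_mul_iff (𝕜 := ℂ)).mp hcs2
  rw [hgnorm] at e2
  have h3 : Sinv (f i) + u i = Sinv (f i) := by
    refine smul_right_injective H ?_ (e2.trans e1.symm)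
    simpa using hnef
  rwa [add_eq_left] at h3
end
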